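/- arXiv:math/0411106 — 2 statements merged into one kernel-verified Lean document; each statement's English description precedes it below -/
import Mathlib

section
/- The sequence gₙ = V_{n+1}/Vₙ, where Vₙ is the volume of the Euclidean n-ball of radius √n/2 circumscribing the unit hypercube, converges as n → ∞ to the constant √(πe/2). -/
open Real MeasureTheory Filter

/-- `V n` is the volume of the Euclidean `n`-ball of radius `√n/2`, the ball
circumscribing the unit hypercube in `n` dimensions. -/
noncomputable def circumVol (n : ℕ) : ℝ :=
  (volume (Metric.closedBall (0 : EuclideanSpace ℝ (Fin n)) (Real.sqrt n / 2))).toReal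

/-!
Since `Vₙ² = (πn/4)ⁿ / Γ(n/2 + 1)²`, the squared ratio is
`(π/4) · (1 + 1/n)ⁿ · (n + 1) · Γ(x)² / Γ(x + 1/2)²` with `x = n/2 + 1`.
Log-convexity of `Γ` squeezes `x Γ(x)² / Γ(x + 1/2)²` between `1` and `(x + 1/2)/x`,
so it tends to `1`, while `(n + 1)/x → 2` and `(1 + 1/n)ⁿ → e`.
-/

open Topology

namespace Real

lemma Gamma_midpoint_sq_le {s t : ℝ} (hs : 0 < s) (ht : 0 < t) :
    Gamma ((s + t) / 2) ^ 2 ≤ Gamma s * Gamma t := by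
  have hconv := convexOn_log_Gamma.2 (Set.mem_Ioi.2 hs) (Set.mem_Ioi.2 ht)
    (by norm_num : (0 : ℝ) ≤ 1 / 2) (by norm_num : (0 : ℝ) ≤ 1 / 2) (by norm_num)
  simp only [Function.comp, smul_eq_mul] at hconv
  rw [show 1 / 2 * s + 1 / 2 * t = (s + t) / 2 by ring] at hconv
  have hm : 0 < Gamma ((s + t) / 2) := Gamma_pos_of_pos (by positivity)
  rw [← log_le_log_iff (by positivity) (mul_pos (Gamma_pos_of_pos hs) (Gamma_pos_of_pos ht)),
    log_pow, log_mul (Gamma_pos_of_pos hs).ne' (Gamma_pos_of_pos ht).ne']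
  push_cast
  linarith

lemma Gamma_add_half_sq_le_mul_Gamma_sq {x : ℝ} (hx : 0 < x) :
    Gamma (x + 1 / 2) ^ 2 ≤ x * Gamma x ^ 2 := by
  have h := Gamma_midpoint_sq_le (t := x + 1) hx (by positivity)
  rw [Gamma_add_one hx.ne', show (x + (x + 1)) / 2 = x + 1 / 2 by ring] at h
  linarith

lemma sq_mul_Gamma_sq_le_mul_Gamma_add_half_sq {x : ℝ} (hx : 0 < x) :
    x ^ 2 * Gamma x ^ 2 ≤ (x + 1 / 2) * Gamma (x + 1 / 2) ^ 2 := by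
  have h := Gamma_midpoint_sq_le (s := x + 1 / 2) (t := x + 1 / 2 + 1) (by positivity)
    (by positivity)
  rw [Gamma_add_one (by positivity), show (x + 1 / 2 + (x + 1 / 2 + 1)) / 2 = x + 1 by ring,
    Gamma_add_one hx.ne'] at h
  linarith

lemma tendsto_mul_Gamma_sq_div_Gamma_add_half_sq :
    Tendsto (fun x => x * Gamma x ^ 2 / Gamma (x + 1 / 2) ^ 2) atTop (𝓝 1) := by
  have hupper : Tendsto (fun x : ℝ => 1 + 2⁻¹ * x⁻¹) atTop (𝓝 1) := by
    simpa using tendsto_inv_atTop_zero.const_mul (2⁻¹ : ℝ) |>.const_add 1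
  refine tendsto_of_tendsto_of_tendsto_of_le_of_le' tendsto_const_nhds hupper ?_ ?_
  all_goals filter_upwards [eventually_gt_atTop 0] with x hx
  all_goals have hΓ : 0 < Gamma (x + 1 / 2) ^ 2 := pow_pos (Gamma_pos_of_pos (by positivity)) 2
  · rw [one_le_div hΓ]
    exact Gamma_add_half_sq_le_mul_Gamma_sq hx
  · rw [show 1 + 2⁻¹ * x⁻¹ = (x + 1 / 2) / x by field_simp, div_le_div_iff₀ hΓ hx]
    linear_combination sq_mul_Gamma_sq_le_mul_Gamma_add_half_sq hx

end Real

lemma circumVol_sq {n : ℕ} (hn : n ≠ 0) :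
    circumVol n ^ 2 = (π * n / 4) ^ n / Gamma (n / 2 + 1) ^ 2 := by
  have : Nonempty (Fin n) := Fin.pos_iff_nonempty.1 (Nat.pos_of_ne_zero hn)
  rw [circumVol, EuclideanSpace.volume_closedBall, Fintype.card_fin,
    ← ENNReal.ofReal_pow (by positivity), ← ENNReal.ofReal_mul (by positivity),
    ENNReal.toReal_ofReal (by positivity), mul_div_assoc', ← mul_pow, div_pow, ← pow_mul,
    mul_comm n, pow_mul, mul_pow, div_pow, sq_sqrt (Nat.cast_nonneg n), sq_sqrt pi_nonneg]
  ring

lemma circumVol_succ_div_sq {n : ℕ} (hn : n ≠ 0) :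
    (circumVol (n + 1) / circumVol n) ^ 2 =
      π / 4 * (1 + 1 / n) ^ n * ((2 - 1 / (n / 2 + 1)) *
        ((n / 2 + 1) * Gamma (n / 2 + 1) ^ 2 / Gamma (n / 2 + 1 + 1 / 2) ^ 2)) := by
  have hn' : (n : ℝ) ≠ 0 := Nat.cast_ne_zero.2 hn
  have hΓ : Gamma (n / 2 + 1) ≠ 0 := (Gamma_pos_of_pos (by positivity)).ne'
  have hΓ' : Gamma (n / 2 + 1 + 1 / 2) ≠ 0 := (Gamma_pos_of_pos (by positivity)).ne'
  have hpow : (π * (n + 1) / 4) ^ n = (π * n / 4) ^ n * (1 + 1 / n) ^ n := by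
    rw [← mul_pow]
    congr 1
    field_simp
  have hpow_ne : (π * n / 4) ^ n ≠ 0 := by positivity
  rw [div_pow, circumVol_sq n.succ_ne_zero, circumVol_sq hn, Nat.cast_succ, pow_succ, hpow,
    show ((n : ℝ) + 1) / 2 + 1 = n / 2 + 1 + 1 / 2 by ring]
  field_simp
  ring

lemma tendsto_circumVol_succ_div_sq :
    Tendsto (fun n => (circumVol (n + 1) / circumVol n) ^ 2) atTop (𝓝 (π * exp 1 / 2)) := by
  have hGamma : Tendsto (fun x : ℝ => (2 - 1 / x) * (x * Gamma x ^ 2 / Gamma (x + 1 / 2) ^ 2))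
      atTop (𝓝 2) := by
    simpa using (tendsto_inv_atTop_zero.const_sub 2).mul
      Real.tendsto_mul_Gamma_sq_div_Gamma_add_half_sq
  have hshift : Tendsto (fun n : ℕ => (n : ℝ) / 2 + 1) atTop atTop :=
    tendsto_atTop_add_const_right _ 1 (tendsto_natCast_atTop_atTop.atTop_div_const two_pos)
  have hlim := ((tendsto_one_add_div_pow_exp 1).const_mul (π / 4)).mul (hGamma.comp hshift)
  rw [show π / 4 * exp 1 * 2 = π * exp 1 / 2 by ring] at hlim
  refine hlim.congr' ?_
  filter_upwards [eventually_ne_atTop 0] with n hn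
  exact (circumVol_succ_div_sq hn).symm

/-- The ratio `gₙ = V_{n+1}/Vₙ` converges to `√(πe/2)` as `n → ∞`. -/
theorem tendsto_ratio_circumscribing_volumes :
    Tendsto (fun n : ℕ => circumVol (n + 1) / circumVol n) atTop
      (nhds (Real.sqrt (π * Real.exp 1 / 2))) := by
  refine ((continuous_sqrt.tendsto _).comp tendsto_circumVol_succ_div_sq).congr fun n => ?_
  exact sqrt_sq (div_nonneg ENNReal.toReal_nonneg ENNReal.toReal_nonneg)
end

section
/- The sequence √n · Γ(n/2) / Γ((n+1)/2) converges to √2 as n → ∞. -/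
/-!
Log-convexity of `Γ` on `[x, x + 1]` and on `[x + a, x + a + 1]`, combined with
`Γ(x + 1) = x Γ(x)`, traps `log Γ(x + a) - log Γ(x) - a log x` between
`(1 - a) (log x - log (x + a))` and `0` for `0 ≤ a ≤ 1`. Hence `Γ(x + a) ~ Γ(x) xᵃ`
(Wendel's limit), and the theorem is the case `a = 1/2`, `x = n/2`.
-/

open Real Filter

namespace Real

theorem log_Gamma_add_one {x : ℝ} (hx : 0 < x) :
    log (Gamma (x + 1)) = log (Gamma x) + log x := by
  rw [Gamma_add_one hx.ne', log_mul hx.ne' (Gamma_pos_of_pos hx).ne', add_comm]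

theorem log_Gamma_add_le {x a : ℝ} (hx : 0 < x) (ha₀ : 0 ≤ a) (ha₁ : a ≤ 1) :
    log (Gamma (x + a)) ≤ log (Gamma x) + a * log x := by
  have h := convexOn_log_Gamma.2 (Set.mem_Ioi.2 hx) (Set.mem_Ioi.2 (by linarith : 0 < x + 1))
    (sub_nonneg.2 ha₁) ha₀ (sub_add_cancel 1 a)
  have hmid : (1 - a) * x + a * (x + 1) = x + a := by ring
  simp only [Function.comp_apply, smul_eq_mul] at h
  rw [hmid, log_Gamma_add_one hx] at h
  linear_combination h

theorem log_Gamma_add_ge {x a : ℝ} (hx : 0 < x) (ha₀ : 0 ≤ a) (ha₁ : a ≤ 1) :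
    log (Gamma x) + a * log x + (1 - a) * (log x - log (x + a)) ≤ log (Gamma (x + a)) := by
  have hxa : 0 < x + a := by linarith
  have h := convexOn_log_Gamma.2 (Set.mem_Ioi.2 hxa) (Set.mem_Ioi.2 (by linarith : 0 < x + a + 1))
    ha₀ (sub_nonneg.2 ha₁) (add_sub_cancel a 1)
  have hmid : a * (x + a) + (1 - a) * (x + a + 1) = x + 1 := by ring
  simp only [Function.comp_apply, smul_eq_mul] at h
  rw [hmid, log_Gamma_add_one hx, log_Gamma_add_one hxa] at h
  linear_combination h

theorem tendsto_log_sub_log_add_atTop (a : ℝ) :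
    Tendsto (fun x : ℝ => log x - log (x + a)) atTop (nhds 0) := by
  have hratio : Tendsto (fun x : ℝ => 1 + a * x⁻¹) atTop (nhds 1) := by
    simpa using tendsto_const_nhds.add (tendsto_inv_atTop_zero.const_mul a)
  have hlog := ((continuousAt_log one_ne_zero).tendsto.comp hratio).neg
  rw [log_one, neg_zero] at hlog
  refine hlog.congr' ?_
  filter_upwards [eventually_gt_atTop 0, eventually_gt_atTop (-a)] with x hx hxa
  have hdiv : 1 + a * x⁻¹ = (x + a) / x := by field_simp
  simp only [Function.comp_apply, hdiv, log_div (by linarith : x + a ≠ 0) hx.ne']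
  ring

theorem tendsto_log_Gamma_add_sub_log_Gamma_sub_mul_log {a : ℝ} (ha₀ : 0 ≤ a) (ha₁ : a ≤ 1) :
    Tendsto (fun x => log (Gamma (x + a)) - log (Gamma x) - a * log x) atTop (nhds 0) := by
  have hlower := (tendsto_log_sub_log_add_atTop a).const_mul (1 - a)
  rw [mul_zero] at hlower
  refine tendsto_of_tendsto_of_tendsto_of_le_of_le' hlower tendsto_const_nhds ?_ ?_
  · filter_upwards [eventually_gt_atTop 0] with x hx
    linarith [log_Gamma_add_ge hx ha₀ ha₁]
  · filter_upwards [eventually_gt_atTop 0] with x hx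
    linarith [log_Gamma_add_le hx ha₀ ha₁]

theorem tendsto_Gamma_add_div_Gamma_mul_rpow {a : ℝ} (ha₀ : 0 ≤ a) (ha₁ : a ≤ 1) :
    Tendsto (fun x => Gamma (x + a) / (Gamma x * x ^ a)) atTop (nhds 1) := by
  have hexp := (continuous_exp.tendsto 0).comp
    (tendsto_log_Gamma_add_sub_log_Gamma_sub_mul_log ha₀ ha₁)
  rw [exp_zero] at hexp
  refine hexp.congr' ?_
  filter_upwards [eventually_gt_atTop 0] with x hx
  have hΓ := Gamma_pos_of_pos hx
  have hΓa := Gamma_pos_of_pos (by linarith : 0 < x + a)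
  rw [Function.comp_apply, sub_sub, exp_sub, exp_add, exp_log hΓa, exp_log hΓ, mul_comm a,
    rpow_def_of_pos hx]

end Real

/-- The sequence `√n · Γ(n/2) / Γ((n+1)/2)` converges to `√2` as `n → ∞`. -/
theorem tendsto_sqrt_mul_gamma_ratio :
    Tendsto (fun n : ℕ => Real.sqrt n * Real.Gamma ((n : ℝ) / 2) /
        Real.Gamma (((n : ℝ) + 1) / 2)) atTop (nhds (Real.sqrt 2)) := by
  have hhalf : Tendsto (fun n : ℕ => (n : ℝ) / 2) atTop atTop :=
    tendsto_natCast_atTop_atTop.atTop_div_const two_pos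
  have hwendel := ((tendsto_Gamma_add_div_Gamma_mul_rpow (a := 1 / 2) (by norm_num)
    (by norm_num)).comp hhalf).inv₀ one_ne_zero
  rw [inv_one] at hwendel
  have hlimit := hwendel.const_mul (Real.sqrt 2)
  rw [mul_one] at hlimit
  refine hlimit.congr fun n => ?_
  have hsqrt : Real.sqrt 2 * Real.sqrt ((n : ℝ) / 2) = Real.sqrt n := by
    rw [← Real.sqrt_mul zero_le_two, mul_div_cancel₀ _ two_ne_zero]
  rw [Function.comp_apply, inv_div, ← sqrt_eq_rpow, ← hsqrt, add_div]
  ring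
end
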